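/- arXiv:1701.00880 — 7 statements merged into one kernel-verified Lean document; each statement's English description precedes it below -/
import Mathlib

section
/- Let l be the number of cycles of ν (the number of orbits of the subgroup generated by ν acting on Fin n, counting fixed points). Then the quadratic form Q_ν over 𝔽₂ is equivalent to the orthogonal sum of (n − l) hyperbolic planes and a zero form of rank 2l: there is an isometric equivalence of quadratic forms between Q_ν and the form on ((Fin (n−l) → F) × (Fin (n−l) → F)) × (Fin (2*l) → F) given by ((a, b), c) ↦ ∑ i, a i * b i. -/
/-!
Over `𝔽₂`, `Q (a, b) = a ⬝ᵥ T b` with `T b = b ∘ ν - b`. The kernel of `T` consists of the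
functions constant on the cycles of `ν`, so it has dimension `l` and `T` has rank `n - l`.
Choose bases `bV`, `bW` with `T (bV j) = bW j` for `j < n - l` and `T (bV j) = 0` otherwise, and
read `a` in the basis dual to `bW` for the dot product: then `Q` is `∑_{j < n - l} a_j b_j`, and the
remaining `2 l` coordinates do not occur.
-/

open Module LinearMap

theorem Equiv.Perm.apply_zpow_apply_eq_of_apply_apply_eq {α β : Type*} {σ : Equiv.Perm α}
    {f : α → β} (h : ∀ x, f (σ x) = f x) (k : ℤ) (x : α) : f ((σ ^ k) x) = f x := by
  induction k using Int.induction_on with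
  | zero => rfl
  | succ k ih => rw [add_comm, zpow_add, zpow_one, Equiv.Perm.mul_apply, h, ih]
  | pred k ih => rw [← ih, ← h, ← Equiv.Perm.mul_apply, ← zpow_one_add, add_sub_cancel]

variable {K : Type*} [Field K]

namespace LinearMap

theorem mem_ker_funLeft_sub_id {α : Type*} {σ : Equiv.Perm α} {w : α → K} :
    w ∈ ker (funLeft K K σ - LinearMap.id) ↔ ∀ x, w (σ x) = w x := by
  simp only [mem_ker, funext_iff, LinearMap.sub_apply, funLeft_apply, id_apply, sub_eq_zero]

theorem finrank_ker_funLeft_sub_id {α : Type*} [Fintype α] (σ : Equiv.Perm α) :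
    finrank K (ker (funLeft K K σ - LinearMap.id)) =
      Nat.card (Quotient (MulAction.orbitRel (Subgroup.zpowers σ) α)) := by
  set O := Quotient (MulAction.orbitRel (Subgroup.zpowers σ) α)
  have : Fintype O := Fintype.ofFinite O
  let φ : (O → K) →ₗ[K] α → K := funLeft K K Quotient.mk''
  have hφ : Function.Injective φ :=
    funLeft_injective_of_surjective _ _ _ Quotient.mk''_surjective
  have hrange : range φ = ker (funLeft K K σ - LinearMap.id) := by
    ext w
    rw [mem_ker_funLeft_sub_id]
    constructor
    · rintro ⟨q, rfl⟩ x
      exact congrArg q (Quotient.sound ⟨⟨σ, Subgroup.mem_zpowers σ⟩, rfl⟩)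
    · intro hw
      refine ⟨Quotient.lift w ?_, rfl⟩
      rintro x y ⟨⟨g, hg⟩, rfl⟩
      obtain ⟨k, rfl⟩ := Subgroup.mem_zpowers_iff.mp hg
      exact Equiv.Perm.apply_zpow_apply_eq_of_apply_apply_eq hw k y
  rw [← hrange, finrank_range_of_inj hφ, Module.finrank_fintype_fun_eq_card,
    Nat.card_eq_fintype_card]

variable {V W : Type*} [AddCommGroup V] [Module K V] [AddCommGroup W] [Module K W]

theorem exists_basis_map_eq_basis [FiniteDimensional K V] [FiniteDimensional K W]
    (T : V →ₗ[K] W) {r k m : ℕ} (hr : finrank K (range T) = r) (hk : finrank K (ker T) = k)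
    (hm : r + m = finrank K W) :
    ∃ (bV : Basis (Fin r ⊕ Fin k) K V) (bW : Basis (Fin r ⊕ Fin m) K W),
      (∀ j, T (bV (.inl j)) = bW (.inl j)) ∧ ∀ i, T (bV (.inr i)) = 0 := by
  obtain ⟨C, hC⟩ := (ker T).exists_isCompl
  obtain ⟨D, hD⟩ := (range T).exists_isCompl
  have hDm : finrank K D = m := by have := Submodule.finrank_add_eq_of_isCompl hD; omega
  let g := finBasisOfFinrankEq K (range T) hr
  let eC : C ≃ₗ[K] range T :=
    (Submodule.quotientEquivOfIsCompl (ker T) C hC).symm.trans T.quotKerEquivRange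
  have heC : ∀ c, (eC c : W) = T c := fun c => by simp [eC]
  let bV := ((g.map eC.symm).prod (finBasisOfFinrankEq K (ker T) hk)).map
    (Submodule.prodEquivOfIsCompl C (ker T) hC.symm)
  let bW := (g.prod (finBasisOfFinrankEq K D hDm)).map
    (Submodule.prodEquivOfIsCompl (range T) D hD)
  refine ⟨bV, bW, fun j => ?_, fun i => ?_⟩
  · simp [bV, bW, ← heC]
  · simp [bV]

theorem BilinForm.apply_map_eq_sum_dualBasis_repr_mul_repr {ι κ κ' : Type*}
    [Fintype ι] [Fintype κ] [DecidableEq ι] [DecidableEq κ'] [Finite κ']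
    {B : LinearMap.BilinForm K V} (hB : B.Nondegenerate) {T : V →ₗ[K] V}
    {bV : Basis (ι ⊕ κ) K V} {bW : Basis (ι ⊕ κ') K V}
    (hinl : ∀ j, T (bV (.inl j)) = bW (.inl j)) (hinr : ∀ i, T (bV (.inr i)) = 0) (a b : V) :
    B a (T b) = ∑ j, (B.dualBasis hB bW).repr a (.inl j) * bV.repr b (.inl j) := by
  conv_lhs => rw [← bV.sum_repr b]
  simp only [map_add, map_sum, map_smul, Fintype.sum_sum_type, hinl, hinr, smul_zero,
    Finset.sum_const_zero, add_zero, BilinForm.dualBasis_repr_apply, smul_eq_mul, mul_comm]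

end LinearMap

theorem QuadraticMap.equivalent_of_eq_sum_repr_mul_repr {V : Type*} [AddCommGroup V]
    [Module K V] {r k : ℕ} {Q : QuadraticForm K (V × V)}
    {H : QuadraticForm K (((Fin r → K) × (Fin r → K)) × (Fin (2 * k) → K))}
    (bA bB : Basis (Fin r ⊕ Fin k) K V)
    (hQ : ∀ a b, Q (a, b) = ∑ j, bA.repr a (.inl j) * bB.repr b (.inl j))
    (hH : ∀ x y z, H ((x, y), z) = ∑ j, x j * y j) :
    Q.Equivalent H := by
  let E : (V × V) ≃ₗ[K] ((Fin r → K) × (Fin r → K)) × (Fin (2 * k) → K) :=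
    bA.equivFun.prodCongr bB.equivFun ≪≫ₗ
      (LinearEquiv.sumArrowLequivProdArrow _ _ K K).prodCongr
        (LinearEquiv.sumArrowLequivProdArrow _ _ K K) ≪≫ₗ
      LinearEquiv.prodProdProdComm K _ _ _ _ ≪≫ₗ
      (LinearEquiv.refl K _).prodCongr
        ((LinearEquiv.sumArrowLequivProdArrow _ _ K K).symm ≪≫ₗ
          LinearEquiv.funCongrLeft K K ((finCongr (two_mul k)).trans finSumFinEquiv.symm))
  refine ⟨{ E with map_app' := ?_ }⟩
  rintro ⟨a, b⟩
  exact (hH _ _ _).trans (hQ a b).symm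

/-- The quadratic form `Q_ν` over `𝔽₂` is equivalent to the orthogonal sum of
`n - l` hyperbolic planes and a zero form of rank `2 * l`, where `l` is the
number of cycles (orbits) of the permutation `ν`. -/
theorem stmt_1 (n : ℕ) (ν : Equiv.Perm (Fin n))
    (l : ℕ)
    (hl : l = Nat.card (Quotient (MulAction.orbitRel (Subgroup.zpowers ν) (Fin n))))
    (Q : QuadraticForm (ZMod 2) ((Fin n → ZMod 2) × (Fin n → ZMod 2)))
    (hQ : ∀ a b : Fin n → ZMod 2, Q (a, b) = ∑ i, (a i * b i + a i * b (ν i)))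
    (H : QuadraticForm (ZMod 2)
      (((Fin (n - l) → ZMod 2) × (Fin (n - l) → ZMod 2)) × (Fin (2 * l) → ZMod 2)))
    (hH : ∀ (a b : Fin (n - l) → ZMod 2) (c : Fin (2 * l) → ZMod 2),
      H ((a, b), c) = ∑ i, a i * b i) :
    QuadraticMap.Equivalent Q H := by
  let T := funLeft (ZMod 2) (ZMod 2) ν - LinearMap.id
  have hker : finrank (ZMod 2) (ker T) = l := hl ▸ finrank_ker_funLeft_sub_id ν
  have hrank := T.finrank_range_add_finrank_ker
  rw [hker, Module.finrank_fin_fun] at hrank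
  obtain ⟨bV, bW, hinl, hinr⟩ :=
    T.exists_basis_map_eq_basis (r := n - l) (m := l) (by omega) hker (by simp; omega)
  let B : LinearMap.BilinForm (ZMod 2) (Fin n → ZMod 2) := dotProductBilin (ZMod 2) (ZMod 2)
  have hB : B.Nondegenerate :=
    ⟨fun v hv => dotProduct_eq_zero v hv,
      fun w hw => dotProduct_eq_zero w fun v => dotProduct_comm w v ▸ hw v⟩
  refine QuadraticMap.equivalent_of_eq_sum_repr_mul_repr (B.dualBasis hB bW) bV
    (fun a b => ?_) hH
  rw [← B.apply_map_eq_sum_dualBasis_repr_mul_repr hB hinl hinr, hQ,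
    dotProductBilin_apply_apply, dotProduct]
  refine Finset.sum_congr rfl fun i _ => ?_
  simp only [T, LinearMap.sub_apply, Pi.sub_apply, funLeft_apply, id_apply, CharTwo.sub_eq_add]
  ring
end

section
/- Let l be the number of cycles of ν (the number of orbits of the subgroup generated by ν acting on Fin n, counting fixed points). Then there is an 𝔽₂-algebra isomorphism CliffordAlgebra Q_ν ≃ (CliffordAlgebra H_{n−l}) ⊗[F] (ExteriorAlgebra F (Fin (2*l) → F)), i.e., the basepoint algebra Ω_ν is isomorphic to the tensor product of the Clifford algebra of (n − l) hyperbolic planes with the exterior algebra on a 2l-dimensional space. -/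
/-!
`Q_ν(a, b) = B_ν a b` for the pairing `B_ν a b = ∑ aᵢ (bᵢ + b_{ν i})`. In characteristic two
the left and the right kernel of `B_ν` are both the space of `ν`-invariant functions, which has one
dimension per cycle of `ν`. In bases adapted to complements of the two kernels `B_ν` becomes the dot
product on `n - l` coordinates, so `Q_ν ≅ H_{n-l} ⊥ 0` with the zero form on a `2l`-dimensional
space. In characteristic two orthogonal vectors anticommute, hence commute, in a Clifford algebra,
so the Clifford algebra of an orthogonal sum is the ordinary tensor product of the Clifford
algebras; and the Clifford algebra of the zero form is the exterior algebra.
-/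

open scoped TensorProduct
open Module LinearMap

namespace LinearMap

section

variable {R M N : Type*} [CommRing R] [AddCommGroup M] [Module R M] [AddCommGroup N] [Module R N]

theorem injective_domRestrict₁₂ (B : M →ₗ[R] N →ₗ[R] R) {C : Submodule R M} {D : Submodule R N}
    (hC : Disjoint C (ker B)) (hD : Codisjoint D (ker B.flip)) :
    Function.Injective (B.domRestrict₁₂ C D) := by
  rw [← ker_eq_bot, Submodule.eq_bot_iff]
  intro c hc
  have hBc : B c = 0 := by
    have hD' : ∀ y ∈ D ⊔ ker B.flip, B c y = 0 := fun y hy => by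
      obtain ⟨d, hd, k, hk, rfl⟩ := Submodule.mem_sup.mp hy
      rw [map_add, show B c d = 0 from congr($hc ⟨d, hd⟩), show B c k = 0 from congr($hk c),
        add_zero]
    exact ext fun y => hD' y (hD.eq_top ▸ Submodule.mem_top)
  exact Subtype.ext (Submodule.disjoint_def.mp hC c c.2 hBc)

end

variable {K V W : Type*} [Field K] [AddCommGroup V] [Module K V] [FiniteDimensional K V]
  [AddCommGroup W] [Module K W]

theorem exists_linearEquiv_prod_ker_apply_eq_dotProduct (B : V →ₗ[K] W →ₗ[K] K) :
    ∃ (r : ℕ) (eV : ((Fin r → K) × ker B) ≃ₗ[K] V) (eW : ((Fin r → K) × ker B.flip) ≃ₗ[K] W),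
      ∀ a b c d, B (eV (a, c)) (eW (b, d)) = a ⬝ᵥ b := by
  obtain ⟨C, hC⟩ := (ker B).exists_isCompl
  obtain ⟨D, hD⟩ := (ker B.flip).exists_isCompl
  let p := B.domRestrict₁₂ C D
  -- `B` restricts to a perfect pairing of `C` and `D`; pair a basis of `C` with its dual basis.
  have : p.IsPerfPair :=
    .of_injective (injective_domRestrict₁₂ B hC.symm.disjoint hD.symm.codisjoint)
      (injective_domRestrict₁₂ B.flip hD.symm.disjoint
        (by rw [flip_flip]; exact hC.symm.codisjoint))
  let u := Module.finBasis K C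
  refine ⟨_, (u.equivFun.symm.prodCongr (.refl K _)).trans
      (Submodule.prodEquivOfIsCompl C _ hC.symm),
    ((u.dualBasis.equivFun.symm.trans p.flip.toPerfPair.symm).prodCongr (.refl K _)).trans
      (Submodule.prodEquivOfIsCompl D _ hD.symm), fun a b c d => ?_⟩
  simp only [LinearEquiv.trans_apply, LinearEquiv.prodCongr_apply, LinearEquiv.refl_apply,
    Submodule.coe_prodEquivOfIsCompl', map_add, add_apply]
  have hc : B c = 0 := c.2
  have hd : ∀ x, B x d = 0 := fun x => congr($(d.2) x)
  rw [hc, hd, zero_apply, zero_apply, add_zero, add_zero, add_zero,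
    show ∀ (x : C) (y : D), B (x : V) (y : W) = p x y from fun _ _ => rfl, apply_toPerfPair_flip]
  simp [Basis.equivFun_symm_apply, dotProduct, Finsupp.single_apply]

end LinearMap

namespace Equiv.Perm

variable {ι : Type*} (R : Type*) [CommRing R] (ν : Perm ι)

def invariantFuns : Submodule R (ι → R) := ker (funLeft R R ν - LinearMap.id)

variable {R ν} in
theorem mem_invariantFuns {f : ι → R} : f ∈ invariantFuns R ν ↔ f ∘ ν = f := sub_eq_zero

theorem invariantFuns_inv : invariantFuns R ν⁻¹ = invariantFuns R ν := by
  ext f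
  rw [mem_invariantFuns, mem_invariantFuns, coe_inv, Equiv.comp_symm_eq, eq_comm]

variable {R ν} in
theorem comp_zpow_of_mem_invariantFuns {f : ι → R} (hf : f ∈ invariantFuns R ν) (k : ℤ) :
    f ∘ ⇑(ν ^ k) = f := by
  have hf' := mem_invariantFuns.mp ((invariantFuns_inv R ν).symm ▸ hf)
  refine zpow_induction_right (P := fun g : Perm ι => f ∘ ⇑g = f) rfl (fun a ha => ?_)
    (fun a ha => ?_) k
  · rw [coe_mul, ← Function.comp_assoc, ha, mem_invariantFuns.mp hf]
  · rw [coe_mul, ← Function.comp_assoc, ha, hf']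

theorem invariantFuns_eq_range : invariantFuns R ν =
    range (funLeft R R (Quotient.mk (MulAction.orbitRel (Subgroup.zpowers ν) ι))) := by
  ext f
  rw [mem_range]
  constructor
  · intro hf
    have hconst : ∀ i j, (MulAction.orbitRel (Subgroup.zpowers ν) ι) i j → f i = f j := by
      rintro i j ⟨⟨g, hg⟩, rfl⟩
      obtain ⟨k, rfl⟩ := Subgroup.mem_zpowers_iff.mp hg
      exact congrFun (comp_zpow_of_mem_invariantFuns hf k) j
    exact ⟨Quotient.lift f hconst, rfl⟩
  · rintro ⟨g, rfl⟩
    refine mem_invariantFuns.mpr (funext fun i => ?_)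
    exact congrArg g <| Quotient.sound <|
      MulAction.mem_orbit i (⟨ν, Subgroup.mem_zpowers ν⟩ : Subgroup.zpowers ν)

theorem finrank_invariantFuns (K : Type*) [Field K] [Finite ι] : finrank K (invariantFuns K ν) =
    Nat.card (Quotient (MulAction.orbitRel (Subgroup.zpowers ν) ι)) := by
  have : Fintype (Quotient (MulAction.orbitRel (Subgroup.zpowers ν) ι)) := Fintype.ofFinite _
  rw [invariantFuns_eq_range, finrank_range_of_inj (funLeft_injective_of_surjective _ _ _
    Quotient.mk_surjective), Module.finrank_pi, Nat.card_eq_fintype_card]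

section Pairing

variable [Fintype ι]

def basepointPairing : (ι → R) →ₗ[R] (ι → R) →ₗ[R] R :=
  (dotProductBilin R R).compl₂ (LinearMap.id + funLeft R R ν)

variable {R ν} in
theorem basepointPairing_apply (a b : ι → R) :
    basepointPairing R ν a b = ∑ i, (a i * b i + a i * b (ν i)) := by
  simp [basepointPairing, dotProduct, mul_add]

theorem basepointPairing_flip : (basepointPairing R ν).flip = basepointPairing R ν⁻¹ := by
  ext b a
  simp only [flip_apply, basepointPairing, compl₂_apply, dotProductBilin_apply_apply,
    LinearMap.add_apply, id_apply, dotProduct_add]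
  change a ⬝ᵥ b + a ⬝ᵥ (b ∘ ν) = b ⬝ᵥ a + b ⬝ᵥ (a ∘ ⇑ν⁻¹)
  rw [dotProduct_comm a b, dotProduct_comm b]
  exact congrArg _ (Fintype.sum_equiv ν _ _ fun i => by simp [mul_comm])

theorem ker_flip_basepointPairing [CharP R 2] :
    ker (basepointPairing R ν).flip = invariantFuns R ν := by
  ext b
  rw [mem_ker, mem_invariantFuns, LinearMap.ext_iff]
  change (∀ a, a ⬝ᵥ (b + b ∘ ν) = 0) ↔ _
  simp_rw [dotProduct_comm _ (b + b ∘ ν)]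
  rw [dotProduct_eq_zero_iff, funext_iff, funext_iff]
  exact forall_congr' fun i => CharTwo.add_eq_zero.trans eq_comm

theorem ker_basepointPairing [CharP R 2] : ker (basepointPairing R ν) = invariantFuns R ν := by
  rw [← flip_flip (basepointPairing R ν), basepointPairing_flip, ker_flip_basepointPairing,
    invariantFuns_inv]

end Pairing

end Equiv.Perm

namespace QuadraticMap

variable {R M₁ M₂ M₃ M₄ M N P : Type*} [CommRing R] [AddCommGroup M₁] [AddCommGroup M₂]
  [AddCommGroup M₃] [AddCommGroup M₄] [AddCommGroup M] [AddCommGroup N] [AddCommGroup P]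
  [Module R M₁] [Module R M₂] [Module R M₃] [Module R M₄] [Module R M] [Module R N] [Module R P]

theorem equivalent_prod_zero_of_apply_eq {H : QuadraticMap R (M₁ × M₂) P}
    {Q : QuadraticMap R (M × N) P} (eM : (M₁ × M₃) ≃ₗ[R] M) (eN : (M₂ × M₄) ≃ₗ[R] N)
    (h : ∀ a b c d, Q (eM (a, c), eN (b, d)) = H (a, b)) :
    (H.prod (0 : QuadraticMap R (M₃ × M₄) P)).Equivalent Q :=
  ⟨{ toLinearEquiv := (LinearEquiv.prodProdProdComm R M₁ M₂ M₃ M₄).trans (eM.prodCongr eN)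
     map_app' := fun ⟨⟨a, b⟩, c, d⟩ => by simp [h] }⟩

end QuadraticMap

theorem Module.add_self_eq_zero_of_charP_two {R A : Type*} [Ring R] [CharP R 2] [AddCommGroup A]
    [Module R A] (x : A) : x + x = 0 := by
  rw [← two_smul R, CharTwo.two_eq_zero, zero_smul]

namespace CliffordAlgebra

variable {R M₁ M₂ : Type*} [CommRing R] [CharP R 2] [AddCommGroup M₁] [AddCommGroup M₂]
  [Module R M₁] [Module R M₂] (Q₁ : QuadraticForm R M₁) (Q₂ : QuadraticForm R M₂)

theorem commute_map_inl_map_inr (x : CliffordAlgebra Q₁) (y : CliffordAlgebra Q₂) :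
    Commute (map (QuadraticMap.Isometry.inl Q₁ Q₂) x)
      (map (QuadraticMap.Isometry.inr Q₁ Q₂) y) := by
  induction x using CliffordAlgebra.induction with
  | algebraMap r => rw [AlgHom.commutes]; exact Algebra.commute_algebraMap_left r _
  | add a b ha hb => rw [map_add]; exact ha.add_left hb
  | mul a b ha hb => rw [map_mul]; exact ha.mul_left hb
  | ι m =>
    induction y using CliffordAlgebra.induction with
    | algebraMap r => rw [AlgHom.commutes]; exact Algebra.commute_algebraMap_right r _
    | add a b ha hb => rw [map_add]; exact ha.add_right hb
    | mul a b ha hb => rw [map_mul]; exact ha.mul_right hb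
    | ι m' =>
      rw [map_apply_ι, map_apply_ι, QuadraticMap.Isometry.inl_apply,
        QuadraticMap.Isometry.inr_apply, Commute, SemiconjBy,
        ι_mul_ι_comm_of_isOrtho (QuadraticMap.IsOrtho.inl_inr m m'),
        neg_eq_of_add_eq_zero_right (Module.add_self_eq_zero_of_charP_two (R := R) _)]

def toTensorProduct :
    CliffordAlgebra (Q₁.prod Q₂) →ₐ[R] CliffordAlgebra Q₁ ⊗[R] CliffordAlgebra Q₂ :=
  lift _ ⟨(Algebra.TensorProduct.includeLeft (S := R)).toLinearMap ∘ₗ ι Q₁ ∘ₗ fst R M₁ M₂ +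
      Algebra.TensorProduct.includeRight.toLinearMap ∘ₗ ι Q₂ ∘ₗ snd R M₁ M₂, by
    rintro ⟨m₁, m₂⟩
    set a :=
      Algebra.TensorProduct.includeLeft (R := R) (S := R) (B := CliffordAlgebra Q₂) (ι Q₁ m₁)
    set b := Algebra.TensorProduct.includeRight (R := R) (A := CliffordAlgebra Q₁) (ι Q₂ m₂)
    have hcross : a * b + b * a = 0 := by
      simp only [a, b, Algebra.TensorProduct.includeLeft_apply,
        Algebra.TensorProduct.includeRight_apply, Algebra.TensorProduct.tmul_mul_tmul, mul_one,
        one_mul, Module.add_self_eq_zero_of_charP_two (R := R)]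
    have ha : a * a = algebraMap R _ (Q₁ m₁) := by
      rw [← AlgHom.commutes Algebra.TensorProduct.includeLeft, ← ι_sq_scalar, map_mul]
    have hb : b * b = algebraMap R _ (Q₂ m₂) := by
      rw [← AlgHom.commutes Algebra.TensorProduct.includeRight, ← ι_sq_scalar, map_mul]
    change (a + b) * (a + b) = _
    calc (a + b) * (a + b) = a * a + b * b + (a * b + b * a) := by noncomm_ring
      _ = _ := by rw [hcross, add_zero, ha, hb, QuadraticMap.prod_apply, map_add]⟩

theorem toTensorProduct_ι (m : M₁ × M₂) :
    toTensorProduct Q₁ Q₂ (ι _ m) = ι Q₁ m.1 ⊗ₜ 1 + 1 ⊗ₜ ι Q₂ m.2 :=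
  lift_ι_apply _ _ _

def ofTensorProduct :
    CliffordAlgebra Q₁ ⊗[R] CliffordAlgebra Q₂ →ₐ[R] CliffordAlgebra (Q₁.prod Q₂) :=
  Algebra.TensorProduct.lift (map (QuadraticMap.Isometry.inl Q₁ Q₂))
    (map (QuadraticMap.Isometry.inr Q₁ Q₂)) (commute_map_inl_map_inr Q₁ Q₂)

def prodEquivTensorProduct :
    CliffordAlgebra (Q₁.prod Q₂) ≃ₐ[R] CliffordAlgebra Q₁ ⊗[R] CliffordAlgebra Q₂ :=
  AlgEquiv.ofAlgHom (toTensorProduct Q₁ Q₂) (ofTensorProduct Q₁ Q₂)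
    (Algebra.TensorProduct.ext (hom_ext <| LinearMap.ext fun m₁ => by
        simp [ofTensorProduct, toTensorProduct_ι])
      (hom_ext <| LinearMap.ext fun m₂ => by simp [ofTensorProduct, toTensorProduct_ι]))
    (hom_ext <| LinearMap.ext fun m => by
      simp only [AlgHom.comp_toLinearMap, LinearMap.comp_apply, AlgHom.toLinearMap_apply,
        toTensorProduct_ι, map_add]
      simp [ofTensorProduct, ← map_add])

end CliffordAlgebra

open Equiv.Perm in
/-- The basepoint algebra `Ω_ν = CliffordAlgebra Q_ν` over `𝔽₂` is isomorphic to
the tensor product of the Clifford algebra of `n - l` hyperbolic planes with the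
exterior algebra on a `2l`-dimensional space, where `l` is the number of cycles
(orbits) of the permutation `ν`. -/
theorem stmt_2 (n : ℕ) (ν : Equiv.Perm (Fin n))
    (l : ℕ)
    (hl : l = Nat.card (Quotient (MulAction.orbitRel (Subgroup.zpowers ν) (Fin n))))
    (Q : QuadraticForm (ZMod 2) ((Fin n → ZMod 2) × (Fin n → ZMod 2)))
    (hQ : ∀ a b : Fin n → ZMod 2, Q (a, b) = ∑ i, (a i * b i + a i * b (ν i)))
    (H : QuadraticForm (ZMod 2) ((Fin (n - l) → ZMod 2) × (Fin (n - l) → ZMod 2)))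
    (hH : ∀ a b : Fin (n - l) → ZMod 2, H (a, b) = ∑ i, a i * b i) :
    Nonempty (CliffordAlgebra Q ≃ₐ[ZMod 2]
      (CliffordAlgebra H ⊗[ZMod 2] ExteriorAlgebra (ZMod 2) (Fin (2 * l) → ZMod 2))) := by
  set B := basepointPairing (ZMod 2) ν
  obtain ⟨r, eV, eW, hB⟩ := B.exists_linearEquiv_prod_ker_apply_eq_dotProduct
  have hker : finrank (ZMod 2) (ker B) = l := by
    rw [ker_basepointPairing, finrank_invariantFuns, hl]
  have hker_flip : finrank (ZMod 2) (ker B.flip) = l := by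
    rw [ker_flip_basepointPairing, finrank_invariantFuns, hl]
  obtain rfl : r = n - l := by
    have := eV.finrank_eq
    rw [finrank_prod, finrank_fin_fun, finrank_fin_fun, hker] at this
    omega
  have hQH : (H.prod 0).Equivalent Q := QuadraticMap.equivalent_prod_zero_of_apply_eq eV eW
    fun a b c d => by rw [hQ, ← basepointPairing_apply, hB, hH]; rfl
  have hzero : (0 : QuadraticForm (ZMod 2) (ker B × ker B.flip)).Equivalent
      (0 : QuadraticForm (ZMod 2) (Fin (2 * l) → ZMod 2)) :=
    ⟨⟨LinearEquiv.ofFinrankEq _ _ (by rw [finrank_prod, hker, hker_flip, finrank_fin_fun, two_mul]),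
      fun _ => rfl⟩⟩
  obtain ⟨e⟩ := ((QuadraticMap.Equivalent.refl H).prod hzero).symm.trans hQH
  exact ⟨(CliffordAlgebra.equivOfIsometry e).symm.trans
    (CliffordAlgebra.prodEquivTensorProduct H 0)⟩
end

section
/- For every vector v ∈ V_n, the element ι(v) lies in the center of the Clifford algebra CliffordAlgebra Q_ν if and only if Σ_ν(v) = v, where Σ_ν is the shift map induced by ν. -/
/-! In characteristic 2, `ι v * ι w + ι w * ι v = polar Q v w` says that `ι v` commutes with `ι w`
exactly when `polar Q v w = 0`, so `ι v` is central iff `v` lies in the radical of the polar form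
(this needs `algebraMap` to be injective, i.e. the Clifford algebra to be nontrivial). For `Q_ν`
the polar form pairs `(a, b)` with `(c, d)` as `(a + a ∘ ν⁻¹) ⬝ᵥ d + (b + b ∘ ν) ⬝ᵥ c`, whose
radical consists of the pairs with `a`, `b` both `ν`-invariant. -/

open CliffordAlgebra

namespace CliffordAlgebra

variable {R M : Type*} [CommRing R] [AddCommGroup M] [Module R M]

-- Over a free module `-Q` comes from a bilinear form, so `CliffordAlgebra Q` is linearly
-- isomorphic to the exterior algebra.
instance [Nontrivial R] [Module.Free R M] (Q : QuadraticForm R M) :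
    Nontrivial (CliffordAlgebra Q) := by
  obtain ⟨B, hB⟩ := LinearMap.BilinMap.toQuadraticMap_surjective (0 - Q)
  have : Nontrivial (CliffordAlgebra (0 : QuadraticForm R M)) :=
    inferInstanceAs (Nontrivial (ExteriorAlgebra R M))
  exact (changeFormEquiv hB).symm.injective.nontrivial

theorem ι_mem_center_iff_forall_commute (Q : QuadraticForm R M) (v : M) :
    ι Q v ∈ Subalgebra.center R (CliffordAlgebra Q) ↔ ∀ w, Commute (ι Q v) (ι Q w) := by
  refine ⟨fun h w => (Subalgebra.mem_center_iff.mp h (ι Q w)).symm, fun h => ?_⟩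
  refine Subalgebra.mem_center_iff.mpr fun x => (Algebra.commute_of_mem_adjoin_of_forall_mem_commute
    (adjoin_range_ι (Q := Q) ▸ Algebra.mem_top) ?_).symm
  rintro _ ⟨w, rfl⟩
  exact h w

theorem ι_mem_center_iff_forall_polar_eq_zero {K : Type*} [Field K] [CharP K 2] [Module K M]
    (Q : QuadraticForm K M) (v : M) :
    ι Q v ∈ Subalgebra.center K (CliffordAlgebra Q) ↔ ∀ w, QuadraticMap.polar Q v w = 0 := by
  have hinj : Function.Injective (algebraMap K (CliffordAlgebra Q)) := (algebraMap K _).injective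
  have := charP_of_injective_algebraMap hinj 2
  rw [ι_mem_center_iff_forall_commute]
  refine forall_congr' fun w => ?_
  rw [commute_iff_eq, ← CharTwo.add_eq_zero, ι_mul_ι_add_swap, map_eq_zero_iff _ hinj]

end CliffordAlgebra

section ShiftForm

variable {R ι : Type*} [CommRing R] [Fintype ι] (ν : Equiv.Perm ι)
  (Q : QuadraticForm R ((ι → R) × (ι → R)))

theorem polar_eq_dotProduct_of_apply_eq_sum
    (hQ : ∀ a b : ι → R, Q (a, b) = ∑ i, (a i * b i + a i * b (ν i))) (a b c d : ι → R) :
    QuadraticMap.polar Q (a, b) (c, d) = (a + a ∘ ν.symm) ⬝ᵥ d + (b + b ∘ ν) ⬝ᵥ c := by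
  have hshift : ∑ i, a i * d (ν i) = ∑ i, a (ν.symm i) * d i := by
    simpa using (Equiv.sum_comp ν (fun i => a (ν.symm i) * d i))
  rw [QuadraticMap.polar, Prod.mk_add_mk, hQ, hQ, hQ]
  simp only [dotProduct, Pi.add_apply, Function.comp_apply, add_mul, Finset.sum_add_distrib,
    mul_add, ← hshift, mul_comm (b _)]
  ring

theorem forall_polar_eq_zero_iff_of_apply_eq_sum
    (hQ : ∀ a b : ι → R, Q (a, b) = ∑ i, (a i * b i + a i * b (ν i))) (a b : ι → R) :
    (∀ w, QuadraticMap.polar Q (a, b) w = 0) ↔ a + a ∘ ν.symm = 0 ∧ b + b ∘ ν = 0 := by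
  simp only [Prod.forall, polar_eq_dotProduct_of_apply_eq_sum ν Q hQ]
  refine ⟨fun h => ⟨dotProduct_eq_zero _ fun d => ?_, dotProduct_eq_zero _ fun c => ?_⟩, ?_⟩
  · simpa using h 0 d
  · simpa using h c 0
  · rintro ⟨ha, hb⟩ c d
    simp [ha, hb]

end ShiftForm

/-- For a vector `v` in `V_n`, the element `ι v` is central in the Clifford
algebra of `Q_ν` if and only if `v` is fixed by the shift map
`Σ_ν (a, b) = (a ∘ ν⁻¹, b ∘ ν⁻¹)`. -/
theorem stmt_3 (n : ℕ) (ν : Equiv.Perm (Fin n))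
    (Q : QuadraticForm (ZMod 2) ((Fin n → ZMod 2) × (Fin n → ZMod 2)))
    (hQ : ∀ a b : Fin n → ZMod 2, Q (a, b) = ∑ i, (a i * b i + a i * b (ν i)))
    (v : (Fin n → ZMod 2) × (Fin n → ZMod 2)) :
    ι Q v ∈ Subalgebra.center (ZMod 2) (CliffordAlgebra Q) ↔
      (v.1 ∘ ⇑ν.symm, v.2 ∘ ⇑ν.symm) = v := by
  obtain ⟨a, b⟩ := v
  rw [ι_mem_center_iff_forall_polar_eq_zero, forall_polar_eq_zero_iff_of_apply_eq_sum ν Q hQ,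
    Prod.mk.injEq, Equiv.comp_symm_eq ν b b]
  simp only [funext_iff, Pi.add_apply, Pi.zero_apply, Function.comp_apply, CharTwo.add_eq_zero]
  exact and_congr_left' (forall_congr' fun _ => eq_comm)
end

section
/- If M is finite-dimensional, then dim M = 2 · dim(range(w ∘ z)); in particular dim M is even and dim(range(w ∘ z)) = dim(range(z ∘ w)) = (dim M)/2. -/
/-!
From `w ∘ w = 0` and `w z + z w = 1` one gets `w = w z w`, so `range (w z) = range w`, and
`ker w = range w`: if `w x = 0` then `x = w (z x)`. Rank–nullity for `w` then reads
`rank M = 2 · rank (range w)`, and `Cardinal.toNat` turns this into the statement about `finrank`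
(both sides are `0` in infinite rank). Exchanging `w` and `z` gives the same for `range (z w)`.
-/

open Module

universe u

namespace LinearMap

section Anticommutator

variable {R M : Type*} [Semiring R] [AddCommMonoid M] [Module R M] {w z : M →ₗ[R] M}

theorem range_comp_eq_range_of_anticomm_eq_id (hw : w ∘ₗ w = 0)
    (hwz : w ∘ₗ z + z ∘ₗ w = id) : range (w ∘ₗ z) = range w := by
  refine le_antisymm (range_comp_le_range z w) ?_
  rintro _ ⟨x, rfl⟩
  have hwwz : w (w (z x)) = 0 := by simpa using congr($hw (z x))
  have hx : w (w (z x)) + w (z (w x)) = w x := by simpa using congr(w ($hwz x))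
  exact ⟨w x, by simpa [hwwz] using hx⟩

theorem ker_eq_range_of_anticomm_eq_id (hw : w ∘ₗ w = 0)
    (hwz : w ∘ₗ z + z ∘ₗ w = id) : ker w = range w := by
  refine le_antisymm (fun x hx ↦ ⟨z x, ?_⟩) (range_le_ker_iff.mpr hw)
  simpa [mem_ker.mp hx] using congr($hwz x)

end Anticommutator

theorem finrank_eq_two_mul_finrank_range_of_ker_eq_range {R : Type*} {M : Type u} [Ring R]
    [AddCommGroup M] [Module R M] [HasRankNullity.{u} R] {f : M →ₗ[R] M}
    (hf : ker f = range f) : finrank R M = 2 * finrank R (range f) := by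
  have h := rank_range_add_rank_ker f
  rw [hf, ← two_mul] at h
  rw [finrank, ← h, Cardinal.toNat_mul, finrank, Cardinal.toNat_ofNat]

end LinearMap

open LinearMap in
theorem stmt_8_general (M : Type*) [AddCommGroup M] [Module (ZMod 2) M]
    (w z : M →ₗ[ZMod 2] M)
    (hw : w ∘ₗ w = 0) (hz : z ∘ₗ z = 0)
    (hwz : w ∘ₗ z + z ∘ₗ w = LinearMap.id) :
    finrank (ZMod 2) M = 2 * finrank (ZMod 2) ↥(LinearMap.range (w ∘ₗ z)) ∧
    Even (finrank (ZMod 2) M) ∧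
    finrank (ZMod 2) ↥(LinearMap.range (w ∘ₗ z)) = finrank (ZMod 2) M / 2 ∧
    finrank (ZMod 2) ↥(LinearMap.range (z ∘ₗ w)) = finrank (ZMod 2) M / 2 := by
  have hzw : z ∘ₗ w + w ∘ₗ z = LinearMap.id := by rw [add_comm, hwz]
  have hdim_w : finrank (ZMod 2) M = 2 * finrank (ZMod 2) (range (w ∘ₗ z)) := by
    rw [range_comp_eq_range_of_anticomm_eq_id hw hwz,
      finrank_eq_two_mul_finrank_range_of_ker_eq_range (ker_eq_range_of_anticomm_eq_id hw hwz)]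
  have hdim_z : finrank (ZMod 2) M = 2 * finrank (ZMod 2) (range (z ∘ₗ w)) := by
    rw [range_comp_eq_range_of_anticomm_eq_id hz hzw,
      finrank_eq_two_mul_finrank_range_of_ker_eq_range (ker_eq_range_of_anticomm_eq_id hz hzw)]
  exact ⟨hdim_w, ⟨_, hdim_w.trans (two_mul _)⟩, by omega, by omega⟩

/-- For a finite-dimensional `Ω₁`-module `M` over `𝔽₂`,
`dim M = 2 · dim (range (w ∘ z))`; in particular `dim M` is even and
`dim (range (w ∘ z)) = dim (range (z ∘ w)) = dim M / 2`. -/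
theorem stmt_8 (M : Type*) [AddCommGroup M] [Module (ZMod 2) M]
    [FiniteDimensional (ZMod 2) M]
    (w z : M →ₗ[ZMod 2] M)
    (hw : w ∘ₗ w = 0) (hz : z ∘ₗ z = 0)
    (hwz : w ∘ₗ z + z ∘ₗ w = LinearMap.id) :
    finrank (ZMod 2) M = 2 * finrank (ZMod 2) ↥(LinearMap.range (w ∘ₗ z)) ∧
    Even (finrank (ZMod 2) M) ∧
    finrank (ZMod 2) ↥(LinearMap.range (w ∘ₗ z)) = finrank (ZMod 2) M / 2 ∧
    finrank (ZMod 2) ↥(LinearMap.range (z ∘ₗ w)) = finrank (ZMod 2) M / 2 :=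
  stmt_8_general M w z hw hz hwz
end

section
/- Suppose S : M →ₗ[F] M is a compatible endomorphism, i.e., S ∘ (w ∘ z) + (w ∘ z) ∘ S = w + z. If u ∈ M satisfies S u = u and (w ∘ z) u = 0, then u = 0; likewise, if u ∈ M satisfies S u = u and (z ∘ w) u = 0, then u = 0. (The proof uses that (w + z) ∘ (w + z) = id, so w + z is invertible.) -/
/-! `w + z` squares to the identity, so it is injective; it therefore suffices to see that a
vector `u` as in the statement satisfies `(w + z) u = 0`. Evaluating the compatibility relation
`S ∘ P + P ∘ S = w + z` at `u` with `P = w ∘ z` gives `(w + z) u = P u`, which is `0` if `P u = 0`,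
and `u + u = 0` if `z w u = 0`, since then `P u = u`. -/

theorem add_self_eq_zero_of_charTwo (R : Type*) {M : Type*} [Semiring R] [CharP R 2]
    [AddCommMonoid M] [Module R M] (u : M) : u + u = 0 := by
  rw [← two_smul R u, CharTwo.two_eq_zero, zero_smul]

namespace LinearMap

variable {R M : Type*} [Semiring R] [AddCommMonoid M] [Module R M]

theorem anticomm_apply_eq_zero_of_apply_eq_self_of_apply_eq_zero {S P : M →ₗ[R] M} {u : M}
    (hS : S u = u) (hP : P u = 0) : (S ∘ₗ P + P ∘ₗ S) u = 0 := by
  simp [hS, hP]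

theorem anticomm_apply_eq_add_self_of_apply_eq_self {S P : M →ₗ[R] M} {u : M}
    (hS : S u = u) (hP : P u = u) : (S ∘ₗ P + P ∘ₗ S) u = u + u := by
  simp [hS, hP]

theorem add_comp_add_eq_id_of_anticomm {w z : M →ₗ[R] M} (hw : w ∘ₗ w = 0) (hz : z ∘ₗ z = 0)
    (hwz : w ∘ₗ z + z ∘ₗ w = id) : (w + z) ∘ₗ (w + z) = id := by
  rw [comp_add, add_comp, add_comp, hw, hz, zero_add, add_zero, add_comm (z ∘ₗ w), hwz]

theorem involutive_add_of_anticomm {w z : M →ₗ[R] M} (hw : w ∘ₗ w = 0) (hz : z ∘ₗ z = 0)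
    (hwz : w ∘ₗ z + z ∘ₗ w = id) : Function.Involutive (w + z) :=
  fun v => congr($(add_comp_add_eq_id_of_anticomm hw hz hwz) v)

end LinearMap

/-- For an `Ω₁`-module `M` over `𝔽₂` and a compatible endomorphism `S`
(i.e. `S ∘ wz + wz ∘ S = w + z`): any vector fixed by `S` and killed by `wz`
(resp. by `zw`) vanishes. -/
theorem stmt_10 (M : Type*) [AddCommGroup M] [Module (ZMod 2) M]
    (w z : M →ₗ[ZMod 2] M)
    (hw : w ∘ₗ w = 0) (hz : z ∘ₗ z = 0)
    (hwz : w ∘ₗ z + z ∘ₗ w = LinearMap.id)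
    (S : M →ₗ[ZMod 2] M)
    (hS : S ∘ₗ (w ∘ₗ z) + (w ∘ₗ z) ∘ₗ S = w + z) :
    (∀ u : M, S u = u → (w ∘ₗ z) u = 0 → u = 0) ∧
    (∀ u : M, S u = u → (z ∘ₗ w) u = 0 → u = 0) := by
  have hinj : Function.Injective (w + z) :=
    (LinearMap.involutive_add_of_anticomm hw hz hwz).injective
  refine ⟨fun u hSu hu => hinj ?_, fun u hSu hu => hinj ?_⟩
  · rw [map_zero, ← hS]
    exact LinearMap.anticomm_apply_eq_zero_of_apply_eq_self_of_apply_eq_zero hSu hu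
  · have hwzu : (w ∘ₗ z) u = u := by
      simpa [hu] using congr($hwz u)
    rw [map_zero, ← hS,
      LinearMap.anticomm_apply_eq_add_self_of_apply_eq_self hSu hwzu]
    exact add_self_eq_zero_of_charTwo (ZMod 2) u
end

section
/- Suppose M is finite-dimensional, S : M →ₗ[F] M is a compatible endomorphism (S ∘ (w ∘ z) + (w ∘ z) ∘ S = w + z), and U is a subspace of M such that S u = u for every u ∈ U and dim M = 2 · dim U. Then M is the internal direct sum of the images (w ∘ z)(U) and (z ∘ w)(U): these two subspaces intersect trivially and span M. -/
open Module

/-! `w ∘ z` and `z ∘ w` are complementary idempotents, so their ranges are independent. Both are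
injective on the `S`-fixed vectors: evaluating `S ∘ wz + wz ∘ S = w + z` at a fixed vector killed
by one of them forces the vector to vanish. Hence each image of `U` has dimension `dim U`, and
together they fill `M`. -/

theorem Submodule.finrank_map_eq_of_disjoint_ker {R M N : Type*} [Ring R] [StrongRankCondition R]
    [AddCommGroup M] [Module R M] [AddCommGroup N] [Module R N] (f : M →ₗ[R] N) (p : Submodule R M)
    (h : Disjoint p (LinearMap.ker f)) : finrank R (p.map f) = finrank R p := by
  have hinj : Function.Injective (f.domRestrict p) := LinearMap.injective_domRestrict_iff.mpr h
  rw [← LinearMap.range_domRestrict]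
  exact LinearMap.finrank_range_of_inj hinj

section

variable {R M : Type*} [Semiring R] [AddCommGroup M] [Module R M] {w z S : M →ₗ[R] M}

theorem disjoint_range_wz_range_zw (hw : w ∘ₗ w = 0) (hz : z ∘ₗ z = 0)
    (hwz : w ∘ₗ z + z ∘ₗ w = LinearMap.id) :
    Disjoint (LinearMap.range (w ∘ₗ z)) (LinearMap.range (z ∘ₗ w)) := by
  have hww (m : M) : w (w m) = 0 := LinearMap.congr_fun hw m
  have hzz (m : M) : z (z m) = 0 := LinearMap.congr_fun hz m
  rw [Submodule.disjoint_def]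
  rintro x ⟨a, hxa⟩ ⟨b, hxb⟩
  calc x = w (z x) + z (w x) := (LinearMap.congr_fun hwz x).symm
    _ = w (z (z (w b))) + z (w (w (z a))) := by nth_rw 1 [← hxb]; rw [← hxa]; rfl
    _ = 0 := by rw [hzz, hww, map_zero, map_zero, add_zero]

theorem disjoint_ker_wz_of_forall_apply_eq_self (hz : z ∘ₗ z = 0)
    (hwz : w ∘ₗ z + z ∘ₗ w = LinearMap.id) (hS : S ∘ₗ (w ∘ₗ z) + (w ∘ₗ z) ∘ₗ S = w + z)
    {U : Submodule R M} (hU : ∀ u ∈ U, S u = u) : Disjoint U (LinearMap.ker (w ∘ₗ z)) := by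
  rw [Submodule.disjoint_def]
  intro u hu (hwzu : w (z u) = 0)
  have hsum : w u + z u = 0 := by
    simpa [hU u hu, hwzu] using (LinearMap.congr_fun hS u).symm
  have hzzu : z (z u) = 0 := LinearMap.congr_fun hz u
  have hzwu : z (w u) = 0 :=
    calc z (w u) = z (w u + z u) := by rw [map_add, hzzu, add_zero]
      _ = 0 := by rw [hsum, map_zero]
  simpa [hwzu, hzwu] using (LinearMap.congr_fun hwz u).symm

theorem disjoint_ker_zw_of_forall_apply_eq_self (hw : w ∘ₗ w = 0)
    (hwz : w ∘ₗ z + z ∘ₗ w = LinearMap.id) (hS : S ∘ₗ (w ∘ₗ z) + (w ∘ₗ z) ∘ₗ S = w + z)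
    {U : Submodule R M} (hU : ∀ u ∈ U, S u = u) : Disjoint U (LinearMap.ker (z ∘ₗ w)) := by
  rw [Submodule.disjoint_def]
  intro u hu (hzwu : z (w u) = 0)
  have hwzu : w (z u) = u := by simpa [hzwu] using LinearMap.congr_fun hwz u
  have hsum : u + u = w u + z u := by
    simpa [hU u hu, hwzu] using LinearMap.congr_fun hS u
  have hwu : w u = 0 := by rw [← hwzu]; exact LinearMap.congr_fun hw (z u)
  calc u = w (w u + z u) := by rw [map_add, hwzu, hwu, map_zero, zero_add]
    _ = 0 := by rw [← hsum, map_add, hwu, add_zero]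

end

/-- For a finite-dimensional `Ω₁`-module `M` over `𝔽₂`, a compatible
endomorphism `S` (with `S ∘ wz + wz ∘ S = w + z`), and a subspace `U` of
`S`-fixed vectors with `dim M = 2 · dim U`, the module `M` is the internal
direct sum of `(w ∘ z)(U)` and `(z ∘ w)(U)`. -/
theorem stmt_11 (M : Type*) [AddCommGroup M] [Module (ZMod 2) M]
    [FiniteDimensional (ZMod 2) M]
    (w z : M →ₗ[ZMod 2] M)
    (hw : w ∘ₗ w = 0) (hz : z ∘ₗ z = 0)
    (hwz : w ∘ₗ z + z ∘ₗ w = LinearMap.id)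
    (S : M →ₗ[ZMod 2] M)
    (hS : S ∘ₗ (w ∘ₗ z) + (w ∘ₗ z) ∘ₗ S = w + z)
    (U : Submodule (ZMod 2) M)
    (hU : ∀ u ∈ U, S u = u)
    (hdim : finrank (ZMod 2) M = 2 * finrank (ZMod 2) U) :
    U.map (w ∘ₗ z) ⊓ U.map (z ∘ₗ w) = ⊥ ∧
    U.map (w ∘ₗ z) ⊔ U.map (z ∘ₗ w) = ⊤ := by
  have hwz_dim := U.finrank_map_eq_of_disjoint_ker _
    (disjoint_ker_wz_of_forall_apply_eq_self hz hwz hS hU)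
  have hzw_dim := U.finrank_map_eq_of_disjoint_ker _
    (disjoint_ker_zw_of_forall_apply_eq_self hw hwz hS hU)
  have hdisj : Disjoint (U.map (w ∘ₗ z)) (U.map (z ∘ₗ w)) :=
    (disjoint_range_wz_range_zw hw hz hwz).mono
      LinearMap.map_le_range LinearMap.map_le_range
  have hcompl := (Submodule.isCompl_iff_disjoint _ _ (by omega)).mpr hdisj
  exact ⟨hcompl.inf_eq_bot, hcompl.sup_eq_top⟩
end

section
/- Let (A δ), (B δ), (C δ), for δ ∈ ℤ, be families of finite-dimensional vector spaces over 𝔽₂, with linear maps g δ : A δ → B δ, h δ : B δ → C δ, f δ : C δ → A (δ−1) forming a long exact sequence: for every δ, range (f (δ+1)) = ker (g δ), range (g δ) = ker (h δ), and range (h δ) = ker (f δ). Suppose there exists N : ℤ such that A δ = 0, B δ = 0, C δ = 0 for all δ ≥ N, and that for every δ one has 2 · dim (A δ) = dim (B (δ+1)) + dim (B δ) and dim (C δ) = dim (B δ). Then for every δ: 2 · rank (g δ) = dim (B δ), 2 · rank (h δ) = dim (B δ), and 2 · rank (f δ) = dim (B δ). -/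
/-!
Exactness and rank–nullity express all dimensions through the ranks of `g`, `h`, `f`, and the
hypotheses on `dim A` and `dim C` then force the defect `2 · rank (h δ) - dim (B δ)` to change
sign from one degree to the next. Its absolute value is therefore constant in `δ`, and it
vanishes in high degrees, so it vanishes everywhere; the other ranks follow.
-/

open Module

theorem LinearMap.finrank_eq_finrank_range_add_finrank_range_of_range_eq_ker
    {K U V W : Type*} [DivisionRing K] [AddCommGroup U] [Module K U]
    [AddCommGroup V] [Module K V] [FiniteDimensional K V] [AddCommGroup W] [Module K W]
    {ψ : U →ₗ[K] V} {φ : V →ₗ[K] W} (hexact : LinearMap.range ψ = LinearMap.ker φ) :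
    finrank K V = finrank K (LinearMap.range φ) + finrank K (LinearMap.range ψ) := by
  rw [hexact]
  exact φ.finrank_range_add_finrank_ker.symm

theorem Int.eq_zero_of_apply_add_one_eq_neg_of_eventually_zero
    {G : Type*} [AddGroup G] {D : ℤ → G} (hstep : ∀ δ, D (δ + 1) = -D δ)
    {N : ℤ} (hvanish : ∀ δ ≥ N, D δ = 0) (δ : ℤ) :
    D δ = 0 := by
  rcases le_total N δ with hNδ | hδN
  · exact hvanish δ hNδ
  induction δ, hδN using Int.leInductionDown with
  | base => exact hvanish N le_rfl
  | pred n _ ih =>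
    have hstep' := hstep (n - 1)
    rw [sub_add_cancel, ih, eq_comm, neg_eq_zero] at hstep'
    exact hstep'

theorem two_mul_rank_eq_of_rank_relations (b rg rh rf : ℤ → ℕ)
    (hB : ∀ δ, b δ = rh δ + rg δ) (hC : ∀ δ, b (δ + 1) = rf δ + rh (δ + 1))
    (hA : ∀ δ, 2 * (rg δ + rf δ) = b (δ + 1) + b δ) (hvanish : ∃ N, ∀ δ ≥ N, b δ = 0)
    (δ : ℤ) :
    2 * rh δ = b δ := by
  obtain ⟨N, hN⟩ := hvanish
  suffices ((2 * rh δ : ℕ) : ℤ) - b δ = 0 by omega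
  refine Int.eq_zero_of_apply_add_one_eq_neg_of_eventually_zero
    (D := fun δ ↦ ((2 * rh δ : ℕ) : ℤ) - b δ) (N := N)
    (fun δ ↦ ?_) (fun δ hδ ↦ ?_) δ
  · have := hB δ; have := hB (δ + 1); have := hC δ; have := hA δ
    omega
  · have := hB δ; have := hN δ hδ
    omega

/-- The graded rank computation for a long exact sequence
`⋯ → A δ → B δ → C δ → A (δ-1) → ⋯` of finite-dimensional `𝔽₂`-vector spaces
(here the connecting maps are reindexed as `f δ : C (δ+1) → A δ`): if the
spaces vanish in all degrees `δ ≥ N`, `2 · dim (A δ) = dim (B (δ+1)) + dim (B δ)`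
and `dim (C δ) = dim (B δ)` for all `δ`, then every map in the sequence has rank
equal to half the dimension of the corresponding `B`-term. -/
theorem stmt_13 (A B C : ℤ → Type*)
    [∀ δ, AddCommGroup (A δ)] [∀ δ, Module (ZMod 2) (A δ)]
    [∀ δ, FiniteDimensional (ZMod 2) (A δ)]
    [∀ δ, AddCommGroup (B δ)] [∀ δ, Module (ZMod 2) (B δ)]
    [∀ δ, FiniteDimensional (ZMod 2) (B δ)]
    [∀ δ, AddCommGroup (C δ)] [∀ δ, Module (ZMod 2) (C δ)]
    [∀ δ, FiniteDimensional (ZMod 2) (C δ)]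
    (g : ∀ δ : ℤ, A δ →ₗ[ZMod 2] B δ)
    (h : ∀ δ : ℤ, B δ →ₗ[ZMod 2] C δ)
    (f : ∀ δ : ℤ, C (δ + 1) →ₗ[ZMod 2] A δ)
    (hexA : ∀ δ : ℤ, LinearMap.range (f δ) = LinearMap.ker (g δ))
    (hexB : ∀ δ : ℤ, LinearMap.range (g δ) = LinearMap.ker (h δ))
    (hexC : ∀ δ : ℤ, LinearMap.range (h (δ + 1)) = LinearMap.ker (f δ))
    (hvanish : ∃ N : ℤ, ∀ δ ≥ N,
      finrank (ZMod 2) (A δ) = 0 ∧ finrank (ZMod 2) (B δ) = 0 ∧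
        finrank (ZMod 2) (C δ) = 0)
    (hdimA : ∀ δ : ℤ,
      2 * finrank (ZMod 2) (A δ) = finrank (ZMod 2) (B (δ + 1)) + finrank (ZMod 2) (B δ))
    (hdimC : ∀ δ : ℤ, finrank (ZMod 2) (C δ) = finrank (ZMod 2) (B δ)) :
    ∀ δ : ℤ,
      2 * finrank (ZMod 2) ↥(LinearMap.range (g δ)) = finrank (ZMod 2) (B δ) ∧
      2 * finrank (ZMod 2) ↥(LinearMap.range (h δ)) = finrank (ZMod 2) (B δ) ∧
      2 * finrank (ZMod 2) ↥(LinearMap.range (f δ)) = finrank (ZMod 2) (B (δ + 1)) := by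
  have hA δ := LinearMap.finrank_eq_finrank_range_add_finrank_range_of_range_eq_ker (hexA δ)
  have hB δ := LinearMap.finrank_eq_finrank_range_add_finrank_range_of_range_eq_ker (hexB δ)
  have hC δ := LinearMap.finrank_eq_finrank_range_add_finrank_range_of_range_eq_ker (hexC δ)
  have hrh := two_mul_rank_eq_of_rank_relations (fun δ ↦ finrank (ZMod 2) (B δ))
    (fun δ ↦ finrank (ZMod 2) (LinearMap.range (g δ)))
    (fun δ ↦ finrank (ZMod 2) (LinearMap.range (h δ)))
    (fun δ ↦ finrank (ZMod 2) (LinearMap.range (f δ))) hB (fun δ ↦ hdimC (δ + 1) ▸ hC δ)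
    (fun δ ↦ hA δ ▸ hdimA δ) (hvanish.imp fun _ hN δ hδ ↦ (hN δ hδ).2.1)
  intro δ
  have := hB δ; have := hB (δ + 1); have := hC δ; have := hdimC (δ + 1)
  have := hrh δ; have := hrh (δ + 1)
  omega
end
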